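/- The set B_{m,n} = {u v : u ∈ U(m), v ∈ U(n)} of outer products is an orthogonal basis of V_{m,n}, the space of m×n real matrices with all row and column sums zero; in particular B_{m,n} has exactly (m-1)(n-1) distinct elements. -/

import Mathlib

open Finset


open Finset

/-- The vector `w(n)` (as a function of the index `i`): for odd `n`,
`w(n)_i = (n-1)/2` for even `i` and `-(n+1)/2` for odd `i` (as in Table 1 of the paper); `w(2) = (1,-1)`;
`w(4) = (1,-1,-1,1)`; for even `n = 2m > 4`, `w(n)_i = w(m)_{i mod m}`. -/
def w (n i : ℕ) : ℤ :=
  if h2 : n < 2 then 0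
  else if n = 2 then (if i = 0 then 1 else -1)
  else if n = 4 then (if i = 0 ∨ i = 3 then 1 else -1)
  else if n % 2 = 1 then (if i % 2 = 0 then ((n : ℤ) - 1) / 2 else -(((n : ℤ) + 1) / 2))
  else w (n / 2) (i % (n / 2))
termination_by n
decreasing_by omega

/-- Indices where `u` is positive. -/
def posIdx {n : ℕ} (u : Fin n → ℤ) : Finset (Fin n) :=
  Finset.univ.filter (fun i => 0 < u i)

/-- Indices where `u` is negative. -/
def negIdx {n : ℕ} (u : Fin n → ℤ) : Finset (Fin n) :=
  Finset.univ.filter (fun i => u i < 0)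

/-- The left child of a vertex labeled `u`: supported on the positive support
of `u`, with the `r`-th (in increasing index order) nonzero entry equal to
`w(a')_r` where `a'` is the size of the positive support. -/
def leftChild {n : ℕ} (u : Fin n → ℤ) : Fin n → ℤ := fun i =>
  if 0 < u i then w (posIdx u).card ((posIdx u).filter (fun j => j < i)).card else 0

/-- The right child of a vertex labeled `u`: supported on the negative support
of `u`, with the `r`-th nonzero entry equal to `w(a'')_r` where `a''` is the
size of the negative support. -/
def rightChild {n : ℕ} (u : Fin n → ℤ) : Fin n → ℤ := fun i =>
  if u i < 0 then w (negIdx u).card ((negIdx u).filter (fun j => j < i)).card else 0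

/-- Rooted binary trees with vertex labels in `α`. -/
inductive BT (α : Type) : Type where
  | node (label : α) (l r : Option (BT α)) : BT α

/-- Build the labeled tree below the vertex labeled `u` (with enough fuel this
is the tree described in the paper: a left child exists iff the positive
support has size at least `2`, a right child iff the negative support does). -/
def build (n : ℕ) : ℕ → (Fin n → ℤ) → BT (Fin n → ℤ)
  | 0, u => .node u none none
  | f + 1, u =>
    .node u
      (if 2 ≤ (posIdx u).card then some (build n f (leftChild u)) else none)
      (if 2 ≤ (negIdx u).card then some (build n f (rightChild u)) else none)

/-- The tree `T_n`, rooted at `w(n)`. (Fuel `n` suffices since the number of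
nonzero entries strictly decreases from parent to child.) -/
def T (n : ℕ) : BT (Fin n → ℤ) := build n n (fun i => w n i)

/-- The list of vertex labels of a tree in depth-first (preorder) order. -/
def labels {α : Type} : BT α → List α
  | .node a none none => [a]
  | .node a (some l) none => a :: labels l
  | .node a none (some r) => a :: labels r
  | .node a (some l) (some r) => a :: (labels l ++ labels r)

/-- A vertex label is skew-symmetric if its nonzero entries form the vector
`w(2) = (1,-1)`. -/
def IsSkew {n : ℕ} (u : Fin n → ℤ) : Prop :=
  ∃ i j : Fin n, i < j ∧ u i = 1 ∧ u j = -1 ∧ ∀ k, k ≠ i → k ≠ j → u k = 0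

instance {n : ℕ} (u : Fin n → ℤ) : Decidable (IsSkew u) := by
  unfold IsSkew; infer_instance

/-- The subspace of real `m × n` matrices with all row and column sums zero. -/
def V (m n : ℕ) : Submodule ℝ (Matrix (Fin m) (Fin n) ℝ) where
  carrier := {A | (∀ i, ∑ j, A i j = 0) ∧ (∀ j, ∑ i, A i j = 0)}
  zero_mem' := by simp
  add_mem' := by
    rintro A B ⟨hA1, hA2⟩ ⟨hB1, hB2⟩
    constructor <;> intro i <;>
      simp [Matrix.add_apply, Finset.sum_add_distrib, hA1, hA2, hB1, hB2]
  smul_mem' := by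
    rintro c A ⟨hA1, hA2⟩
    constructor <;> intro i <;>
      simp [Matrix.smul_apply, ← Finset.mul_sum, hA1, hA2]

/-- `B_{m,n}`, the set of outer products `u v` with `u ∈ U(m)`, `v ∈ U(n)`
(the vertex labels of `T_m` and `T_n`, viewed as real vectors). -/
def B (m n : ℕ) : Set (Matrix (Fin m) (Fin n) ℝ) :=
  {X | ∃ u ∈ labels (T m), ∃ v ∈ labels (T n),
    X = Matrix.vecMulVec (fun i => (u i : ℝ)) (fun j => (v j : ℝ))}

/-!
Every vertex label `u` of `T_k` sums to zero and is constant on its positive and on its negative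
support, and its two children are supported on these two sets. Hence `u` is orthogonal to every
label below it (those sum to zero on a set where `u` is constant), and labels in the two subtrees
have disjoint supports. Splitting a support of size `s` into sizes `s'` and `s''` adds
`1 + (s' - 1) + (s'' - 1) = s - 1` labels, so `T_k` has `k - 1` of them.

Since `⟪a bᵀ, c dᵀ⟫ = (a ⬝ c) (b ⬝ d)`, the outer products of two such orthogonal families are
pairwise orthogonal and nonzero, hence `(m - 1)(n - 1)` linearly independent matrices in `V m n`;
and `dim V m n ≤ (m - 1)(n - 1)` because a matrix with zero line sums is determined by its
top-left `(m - 1) × (n - 1)` block.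
-/

open Matrix

lemma w_two (i : ℕ) : w 2 i = if i = 0 then 1 else -1 := by
  rw [w]; norm_num

lemma w_four (i : ℕ) : w 4 i = if i = 0 ∨ i = 3 then 1 else -1 := by
  rw [w]; norm_num

lemma w_of_odd {a : ℕ} (ha : 3 ≤ a) (hodd : a % 2 = 1) (i : ℕ) :
    w a i = if i % 2 = 0 then ((a / 2 : ℕ) : ℤ) else -((a / 2 : ℕ) + 1) := by
  rw [w, dif_neg (by omega), if_neg (by omega), if_neg (by omega), if_pos hodd]
  split_ifs <;> omega

lemma w_of_even {a : ℕ} (ha : 6 ≤ a) (heven : a % 2 = 0) (i : ℕ) :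
    w a i = w (a / 2) (i % (a / 2)) := by
  rw [w, dif_neg (by omega), if_neg (by omega), if_neg (by omega), if_neg (by omega)]

lemma sum_range_ite_mod_two (x y : ℤ) (k : ℕ) :
    ∑ i ∈ range (2 * k + 1), (if i % 2 = 0 then x else y) = (k + 1) * x + k * y := by
  induction k with
  | zero => simp
  | succ k ih =>
    rw [show 2 * (k + 1) + 1 = 2 * k + 1 + 1 + 1 by ring, sum_range_succ, sum_range_succ, ih]
    have h1 : (2 * k + 1) % 2 = 1 := by omega
    have h2 : (2 * k + 1 + 1) % 2 = 0 := by omega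
    rw [h1, h2, if_neg one_ne_zero, if_pos rfl]
    push_cast
    ring

lemma sum_range_add_self_mod {M : Type*} [AddCommMonoid M] (f : ℕ → M) (m : ℕ) :
    ∑ i ∈ range (m + m), f (i % m) = ∑ i ∈ range m, f i + ∑ i ∈ range m, f i := by
  rw [sum_range_add]
  congr 1 <;> refine sum_congr rfl fun i hi => ?_
  · rw [Nat.mod_eq_of_lt (mem_range.mp hi)]
  · rw [Nat.add_mod_left, Nat.mod_eq_of_lt (mem_range.mp hi)]

theorem exists_w_two_valued {a : ℕ} (ha : 2 ≤ a) : ∃ p q : ℤ, 0 < p ∧ q < 0 ∧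
    (∀ i < a, w a i = p ∨ w a i = q) ∧ 0 < w a 0 ∧ ∑ i ∈ range a, w a i = 0 := by
  induction a using Nat.strong_induction_on with
  | _ a ih =>
    rcases (show a = 2 ∨ a = 4 ∨ (3 ≤ a ∧ a % 2 = 1) ∨ (6 ≤ a ∧ a % 2 = 0) by omega)
      with rfl | rfl | ⟨h3, hodd⟩ | ⟨h6, heven⟩
    · refine ⟨1, -1, one_pos, by norm_num, fun i _ => ?_, by simp [w_two],
        by simp [sum_range_succ, w_two]⟩
      rw [w_two]; split_ifs <;> simp
    · refine ⟨1, -1, one_pos, by norm_num, fun i _ => ?_, by simp [w_four],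
        by simp [sum_range_succ, w_four]⟩
      rw [w_four]; split_ifs <;> simp
    · refine ⟨(a / 2 : ℕ), -((a / 2 : ℕ) + 1), by omega, by omega, fun i _ => ?_, ?_, ?_⟩
      · rw [w_of_odd h3 hodd]; split_ifs <;> simp
      · rw [w_of_odd h3 hodd, if_pos (Nat.zero_mod 2)]; omega
      · simp_rw [w_of_odd h3 hodd]
        rw [show a = 2 * (a / 2) + 1 by omega, sum_range_ite_mod_two]
        simp only [show (2 * (a / 2) + 1) / 2 = a / 2 by omega]
        ring
    · obtain ⟨m, rfl⟩ : ∃ m, a = m + m := ⟨a / 2, by omega⟩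
      have hw (i : ℕ) : w (m + m) i = w m (i % m) := by
        rw [w_of_even h6 heven, show (m + m) / 2 = m by omega]
      obtain ⟨p, q, hp, hq, hval, h0, hsum⟩ := ih m (by omega) (by omega)
      refine ⟨p, q, hp, hq, fun i _ => ?_, ?_, ?_⟩
      · rw [hw]; exact hval _ (Nat.mod_lt _ (by omega))
      · rwa [hw, Nat.zero_mod]
      · simp_rw [hw]
        rw [sum_range_add_self_mod, hsum, add_zero]

lemma labels_node {α : Type} (a : α) (l r : Option (BT α)) :
    labels (.node a l r) = a :: (l.elim [] labels ++ r.elim [] labels) := by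
  cases l <;> cases r <;> simp [labels]

section VertexLabels

variable {n : ℕ}

def rankIn (s : Finset (Fin n)) (i : Fin n) : ℕ := #(s.filter (· < i))

lemma rankIn_lt {s : Finset (Fin n)} {i : Fin n} (hi : i ∈ s) : rankIn s i < #s :=
  card_lt_card <| filter_ssubset.mpr ⟨i, hi, lt_irrefl i⟩

lemma rankIn_strictMonoOn (s : Finset (Fin n)) : StrictMonoOn (rankIn s) s := by
  intro i hi j _ hij
  refine card_lt_card <| (ssubset_iff_of_subset ?_).mpr ⟨i, ?_, ?_⟩
  · exact monotone_filter_right s fun k _ hk => hk.trans hij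
  · simpa [hij] using hi
  · simp

lemma image_rankIn (s : Finset (Fin n)) : s.image (rankIn s) = range #s := by
  refine eq_of_subset_of_card_le (fun r hr => ?_) ?_
  · obtain ⟨i, hi, rfl⟩ := mem_image.mp hr
    exact mem_range.mpr (rankIn_lt hi)
  · rw [card_range, card_image_of_injOn (rankIn_strictMonoOn s).injOn]

lemma rankIn_univ (i : Fin n) : rankIn univ i = i := by
  simp [rankIn, filter_gt_eq_Iio]

def wOn (s : Finset (Fin n)) : Fin n → ℤ := fun i => if i ∈ s then w #s (rankIn s i) else 0

lemma leftChild_eq_wOn (u : Fin n → ℤ) : leftChild u = wOn (posIdx u) := by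
  ext i; simp [leftChild, wOn, posIdx, rankIn]

lemma rightChild_eq_wOn (u : Fin n → ℤ) : rightChild u = wOn (negIdx u) := by
  ext i; simp [rightChild, wOn, negIdx, rankIn]

lemma wOn_univ : wOn (univ : Finset (Fin n)) = fun i : Fin n => w n i := by
  ext i; simp [wOn, rankIn_univ]

structure IsTwoLevel (u : Fin n → ℤ) : Prop where
  sum_eq_zero : ∑ i, u i = 0
  posIdx_nonempty : (posIdx u).Nonempty
  eq_of_pos : ∀ i j, 0 < u i → 0 < u j → u i = u j
  eq_of_neg : ∀ i j, u i < 0 → u j < 0 → u i = u j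

def suppIdx (u : Fin n → ℤ) : Finset (Fin n) := univ.filter (u · ≠ 0)

lemma mem_suppIdx {u : Fin n → ℤ} {i : Fin n} : i ∈ suppIdx u ↔ u i ≠ 0 := by simp [suppIdx]
lemma mem_posIdx {u : Fin n → ℤ} {i : Fin n} : i ∈ posIdx u ↔ 0 < u i := by simp [posIdx]
lemma mem_negIdx {u : Fin n → ℤ} {i : Fin n} : i ∈ negIdx u ↔ u i < 0 := by simp [negIdx]

lemma posIdx_subset_suppIdx (u : Fin n → ℤ) : posIdx u ⊆ suppIdx u := fun i hi => by
  rw [mem_suppIdx]; exact (mem_posIdx.mp hi).ne'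

lemma negIdx_subset_suppIdx (u : Fin n → ℤ) : negIdx u ⊆ suppIdx u := fun i hi => by
  rw [mem_suppIdx]; exact (mem_negIdx.mp hi).ne

lemma card_posIdx_add_card_negIdx (u : Fin n → ℤ) : #(posIdx u) + #(negIdx u) = #(suppIdx u) := by
  rw [posIdx, negIdx, ← card_union_of_disjoint (disjoint_filter.mpr fun _ _ h => h.asymm)]
  congr 1; ext i
  simp only [mem_union, mem_filter, mem_univ, true_and, mem_suppIdx]
  omega

lemma IsTwoLevel.negIdx_nonempty {u : Fin n → ℤ} (hu : IsTwoLevel u) : (negIdx u).Nonempty := by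
  by_contra h
  have hnonneg (i : Fin n) : 0 ≤ u i := not_lt.mp fun hi => h ⟨i, mem_negIdx.mpr hi⟩
  obtain ⟨i, hi⟩ := hu.posIdx_nonempty
  have := (sum_eq_zero_iff_of_nonneg fun i _ => hnonneg i).mp hu.sum_eq_zero i (mem_univ i)
  exact (mem_posIdx.mp hi).ne' this

lemma IsTwoLevel.ne_zero {u : Fin n → ℤ} (hu : IsTwoLevel u) : u ≠ 0 := fun h => by
  obtain ⟨i, hi⟩ := hu.posIdx_nonempty
  simp [mem_posIdx, h] at hi

lemma dotProduct_eq_zero_of_disjoint {u v : Fin n → ℤ} (h : Disjoint (suppIdx u) (suppIdx v)) :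
    u ⬝ᵥ v = 0 :=
  sum_eq_zero fun i _ => by
    by_cases hu : u i = 0
    · simp [hu]
    · simp [not_not.mp fun hv => disjoint_left.mp h (mem_suppIdx.mpr hu) (mem_suppIdx.mpr hv)]

lemma dotProduct_eq_zero_of_constant_on_suppIdx {u v : Fin n → ℤ} (hv : ∑ i, v i = 0)
    (hu : ∀ i ∈ suppIdx v, ∀ j ∈ suppIdx v, u i = u j) : u ⬝ᵥ v = 0 := by
  by_cases h : ∃ k, v k ≠ 0
  · obtain ⟨k, hk⟩ := h
    calc u ⬝ᵥ v = ∑ i, u k * v i := sum_congr rfl fun i _ => by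
          by_cases hi : v i = 0
          · simp [hi]
          · rw [hu i (mem_suppIdx.mpr hi) k (mem_suppIdx.mpr hk)]
      _ = 0 := by rw [← mul_sum, hv, mul_zero]
  · push Not at h
    simp [dotProduct, h]

lemma sum_wOn {s : Finset (Fin n)} (hs : 2 ≤ #s) : ∑ i, wOn s i = 0 := by
  obtain ⟨-, -, -, -, -, -, hsum⟩ := exists_w_two_valued hs
  calc ∑ i, wOn s i = ∑ i ∈ s, w #s (rankIn s i) := by
        simp only [wOn]; rw [sum_ite_mem, univ_inter]
    _ = ∑ r ∈ s.image (rankIn s), w #s r := (sum_image (rankIn_strictMonoOn s).injOn).symm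
    _ = 0 := by rw [image_rankIn, hsum]

lemma exists_wOn_two_valued {s : Finset (Fin n)} (hs : 2 ≤ #s) : ∃ p q : ℤ, 0 < p ∧ q < 0 ∧
    (∀ i ∈ s, wOn s i = p ∨ wOn s i = q) ∧ (∀ i ∉ s, wOn s i = 0) ∧ ∃ i, 0 < wOn s i := by
  obtain ⟨p, q, hp, hq, hval, h0, -⟩ := exists_w_two_valued hs
  obtain ⟨i, hi, hi0⟩ := mem_image.mp ((image_rankIn s).symm ▸ mem_range.mpr (by omega : 0 < #s))
  exact ⟨p, q, hp, hq, fun i hi => by simpa [wOn, hi] using hval _ (rankIn_lt hi),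
    fun i hi => by simp [wOn, hi], i, by simpa [wOn, hi, hi0] using h0⟩

lemma suppIdx_wOn {s : Finset (Fin n)} (hs : 2 ≤ #s) : suppIdx (wOn s) = s := by
  obtain ⟨p, q, hp, hq, hval, hzero, -⟩ := exists_wOn_two_valued hs
  ext i
  rw [mem_suppIdx]
  by_cases hi : i ∈ s
  · simp only [hi, iff_true]; rcases hval i hi with h | h <;> omega
  · simp [hi, hzero i hi]

lemma isTwoLevel_wOn {s : Finset (Fin n)} (hs : 2 ≤ #s) : IsTwoLevel (wOn s) := by
  obtain ⟨p, q, hp, hq, hval, hzero, i, hi⟩ := exists_wOn_two_valued hs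
  have hcases (i : Fin n) : wOn s i = 0 ∨ wOn s i = p ∨ wOn s i = q := by
    by_cases hi : i ∈ s
    · exact Or.inr (hval i hi)
    · exact Or.inl (hzero i hi)
  refine ⟨sum_wOn hs, ⟨i, mem_posIdx.mpr hi⟩, fun i j hi hj => ?_, fun i j hi hj => ?_⟩
  · rcases hcases i with h | h | h <;> rcases hcases j with h' | h' | h' <;> omega
  · rcases hcases i with h | h | h <;> rcases hcases j with h' | h' | h' <;> omega

/-- The labels of the subtree hanging at a child supported on `s` (if there is one). -/
def branch (f : ℕ) (s : Finset (Fin n)) : List (Fin n → ℤ) :=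
  if 2 ≤ #s then labels (build n f (wOn s)) else []

lemma labels_build_succ (f : ℕ) (u : Fin n → ℤ) :
    labels (build n (f + 1) u) = u :: (branch f (posIdx u) ++ branch f (negIdx u)) := by
  rw [build, labels_node, leftChild_eq_wOn, rightChild_eq_wOn, branch, branch]
  split_ifs <;> rfl

lemma pairwise_dotProduct_cons_append {u : Fin n → ℤ} (hu : IsTwoLevel u) {L R : List (Fin n → ℤ)}
    (hL : ∀ v ∈ L, IsTwoLevel v ∧ suppIdx v ⊆ posIdx u)
    (hR : ∀ v ∈ R, IsTwoLevel v ∧ suppIdx v ⊆ negIdx u)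
    (hLp : L.Pairwise (· ⬝ᵥ · = 0)) (hRp : R.Pairwise (· ⬝ᵥ · = 0)) :
    (u :: (L ++ R)).Pairwise (· ⬝ᵥ · = 0) := by
  refine List.pairwise_cons.mpr ⟨fun v hv => ?_, List.pairwise_append.mpr ⟨hLp, hRp, ?_⟩⟩
  · rcases List.mem_append.mp hv with hv | hv
    · refine dotProduct_eq_zero_of_constant_on_suppIdx (hL v hv).1.sum_eq_zero fun i hi j hj => ?_
      exact hu.eq_of_pos i j (mem_posIdx.mp ((hL v hv).2 hi)) (mem_posIdx.mp ((hL v hv).2 hj))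
    · refine dotProduct_eq_zero_of_constant_on_suppIdx (hR v hv).1.sum_eq_zero fun i hi j hj => ?_
      exact hu.eq_of_neg i j (mem_negIdx.mp ((hR v hv).2 hi)) (mem_negIdx.mp ((hR v hv).2 hj))
  · refine fun x hx y hy => dotProduct_eq_zero_of_disjoint ?_
    refine disjoint_of_subset_left (hL x hx).2 (disjoint_of_subset_right (hR y hy).2 ?_)
    exact disjoint_filter.mpr fun _ _ h => h.asymm

theorem labels_build_isTwoLevel_and_pairwise (f : ℕ) (u : Fin n → ℤ) (hu : IsTwoLevel u) :
    (∀ v ∈ labels (build n f u), IsTwoLevel v ∧ suppIdx v ⊆ suppIdx u) ∧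
      (labels (build n f u)).Pairwise (· ⬝ᵥ · = 0) := by
  induction f generalizing u with
  | zero => simp [build, labels, hu]
  | succ f ih =>
    have hbranch (s : Finset (Fin n)) : (∀ v ∈ branch f s, IsTwoLevel v ∧ suppIdx v ⊆ s) ∧
        (branch f s).Pairwise (· ⬝ᵥ · = 0) := by
      unfold branch
      split_ifs with hs
      · simpa only [suppIdx_wOn hs] using ih _ (isTwoLevel_wOn hs)
      · simp
    obtain ⟨hL, hLp⟩ := hbranch (posIdx u)
    obtain ⟨hR, hRp⟩ := hbranch (negIdx u)
    rw [labels_build_succ]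
    refine ⟨fun v hv => ?_, pairwise_dotProduct_cons_append hu hL hR hLp hRp⟩
    rcases List.mem_cons.mp hv with rfl | hv
    · exact ⟨hu, subset_rfl⟩
    rcases List.mem_append.mp hv with hv | hv
    · exact ⟨(hL v hv).1, (hL v hv).2.trans (posIdx_subset_suppIdx u)⟩
    · exact ⟨(hR v hv).1, (hR v hv).2.trans (negIdx_subset_suppIdx u)⟩

theorem length_labels_build (f : ℕ) (u : Fin n → ℤ) (hu : IsTwoLevel u)
    (hf : #(suppIdx u) ≤ f + 1) : (labels (build n f u)).length = #(suppIdx u) - 1 := by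
  induction f generalizing u with
  | zero =>
    have := hu.posIdx_nonempty.card_pos
    have := hu.negIdx_nonempty.card_pos
    have := card_posIdx_add_card_negIdx u
    omega
  | succ f ih =>
    have hbranch (s : Finset (Fin n)) (hs : #s ≤ f + 1) : (branch f s).length = #s - 1 := by
      unfold branch
      split_ifs with h2
      · rw [ih _ (isTwoLevel_wOn h2) (by rwa [suppIdx_wOn h2]), suppIdx_wOn h2]
      · simp only [List.length_nil]; omega
    have := hu.posIdx_nonempty.card_pos
    have := hu.negIdx_nonempty.card_pos
    have := card_posIdx_add_card_negIdx u
    rw [labels_build_succ, List.length_cons, List.length_append, hbranch _ (by omega),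
      hbranch _ (by omega)]
    omega

end VertexLabels

section TreeT

variable {k : ℕ}

lemma T_eq_build : T k = build k k (wOn univ) := by rw [T, wOn_univ]

theorem isTwoLevel_of_mem_labels_T (hk : 2 ≤ k) {u : Fin k → ℤ} (hu : u ∈ labels (T k)) :
    IsTwoLevel u := by
  rw [T_eq_build] at hu
  exact ((labels_build_isTwoLevel_and_pairwise k _ (isTwoLevel_wOn (by simpa using hk))).1 u hu).1

theorem pairwise_labels_T (hk : 2 ≤ k) : (labels (T k)).Pairwise (· ⬝ᵥ · = 0) := by
  rw [T_eq_build]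
  exact (labels_build_isTwoLevel_and_pairwise k _ (isTwoLevel_wOn (by simpa using hk))).2

theorem length_labels_T (hk : 2 ≤ k) : (labels (T k)).length = k - 1 := by
  have huniv : 2 ≤ #(univ : Finset (Fin k)) := by simpa using hk
  rw [T_eq_build, length_labels_build k _ (isTwoLevel_wOn huniv) (by simp [suppIdx_wOn huniv]),
    suppIdx_wOn huniv, card_univ, Fintype.card_fin]

theorem nodup_labels_T (hk : 2 ≤ k) : (labels (T k)).Nodup :=
  (pairwise_labels_T hk).imp_of_mem fun hu _ h huv =>
    (isTwoLevel_of_mem_labels_T hk hu).ne_zero (dotProduct_self_eq_zero.mp (huv ▸ h))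

end TreeT

/-- `U(k)`, with the labels viewed as real vectors. -/
def U (k : ℕ) : Set (Fin k → ℝ) := (fun u i => (u i : ℝ)) '' {u | u ∈ labels (T k)}

section RealLabels

variable {k : ℕ}

lemma intCast_dotProduct (u v : Fin k → ℤ) :
    ((u ⬝ᵥ v : ℤ) : ℝ) = (fun i => (u i : ℝ)) ⬝ᵥ (fun i => (v i : ℝ)) := by
  simp [dotProduct]

theorem ncard_U (hk : 2 ≤ k) : (U k).ncard = k - 1 := by
  have hinj : Function.Injective fun (u : Fin k → ℤ) (i : Fin k) => (u i : ℝ) :=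
    fun u v h => funext fun i => Int.cast_injective (congrFun h i)
  rw [U, Set.ncard_image_of_injective _ hinj, ← List.coe_toFinset,
    Set.ncard_coe_finset, List.toFinset_card_of_nodup (nodup_labels_T hk), length_labels_T hk]

theorem pairwise_U (hk : 2 ≤ k) : (U k).Pairwise (· ⬝ᵥ · = 0) := by
  have : Std.Symm fun x y : Fin k → ℤ => x ⬝ᵥ y = 0 := ⟨fun x y h => by rwa [dotProduct_comm]⟩
  rintro _ ⟨u, hu, rfl⟩ _ ⟨v, hv, rfl⟩ hne
  rw [← intCast_dotProduct, (pairwise_labels_T hk).forall hu hv fun h => hne (h ▸ rfl),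
    Int.cast_zero]

theorem dotProduct_self_ne_zero_of_mem_U (hk : 2 ≤ k) {x : Fin k → ℝ} (hx : x ∈ U k) :
    x ⬝ᵥ x ≠ 0 := by
  obtain ⟨u, hu, rfl⟩ := hx
  rw [← intCast_dotProduct, Int.cast_ne_zero, Ne, dotProduct_self_eq_zero]
  exact (isTwoLevel_of_mem_labels_T hk hu).ne_zero

theorem sum_eq_zero_of_mem_U (hk : 2 ≤ k) {x : Fin k → ℝ} (hx : x ∈ U k) : ∑ i, x i = 0 := by
  obtain ⟨u, hu, rfl⟩ := hx
  show ∑ i, (u i : ℝ) = 0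
  exact_mod_cast (isTwoLevel_of_mem_labels_T hk hu).sum_eq_zero

end RealLabels

lemma B_eq_image2 (m n : ℕ) : B m n = Set.image2 vecMulVec (U m) (U n) := by
  ext X
  simp [B, U, Set.mem_image2, eq_comm]

section Frobenius

variable {ι κ : Type*} [Fintype ι] [Fintype κ]

def frobeniusForm (R : Type*) [CommSemiring R] : LinearMap.BilinForm R (Matrix ι κ R) :=
  LinearMap.mk₂ R (fun X Y => ∑ i, ∑ j, X i j * Y i j)
    (fun _ _ _ => by simp only [Matrix.add_apply, add_mul, sum_add_distrib])
    (fun _ _ _ => by simp only [Matrix.smul_apply, smul_eq_mul, mul_sum, mul_assoc])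
    (fun _ _ _ => by simp only [Matrix.add_apply, mul_add, sum_add_distrib])
    (fun _ _ _ => by simp only [Matrix.smul_apply, smul_eq_mul, mul_sum, mul_left_comm])

lemma frobeniusForm_apply {R : Type*} [CommSemiring R] (X Y : Matrix ι κ R) :
    frobeniusForm R X Y = ∑ i, ∑ j, X i j * Y i j := rfl

lemma frobeniusForm_vecMulVec {R : Type*} [CommSemiring R] (a c : ι → R) (b d : κ → R) :
    frobeniusForm R (vecMulVec a b) (vecMulVec c d) = (a ⬝ᵥ c) * (b ⬝ᵥ d) := by
  simp only [frobeniusForm_apply, vecMulVec_apply, dotProduct, sum_mul_sum]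
  exact sum_congr rfl fun i _ => sum_congr rfl fun j _ => by ring

variable {K : Type*} [Field K]

lemma linearIndependent_of_pairwise_frobeniusForm {S : Set (Matrix ι κ K)}
    (hS : S.Pairwise (frobeniusForm K · · = 0)) (h0 : ∀ X ∈ S, frobeniusForm K X X ≠ 0) :
    LinearIndependent K (Subtype.val : S → Matrix ι κ K) :=
  LinearMap.BilinForm.linearIndependent_of_iIsOrtho
    (fun X Y hXY => hS X.2 Y.2 (Subtype.coe_ne_coe.mpr hXY)) fun X => h0 X X.2

variable {S : Set (ι → K)} {S' : Set (κ → K)}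

lemma frobeniusForm_vecMulVec_eq_zero (hS : S.Pairwise (· ⬝ᵥ · = 0))
    (hS' : S'.Pairwise (· ⬝ᵥ · = 0)) {a c : ι → K} {b d : κ → K} (ha : a ∈ S) (hc : c ∈ S)
    (hb : b ∈ S') (hd : d ∈ S') (hne : (a, b) ≠ (c, d)) :
    frobeniusForm K (vecMulVec a b) (vecMulVec c d) = 0 := by
  rw [frobeniusForm_vecMulVec]
  by_cases hac : a = c
  · subst hac
    rw [hS' hb hd fun hbd => hne (hbd ▸ rfl), mul_zero]
  · rw [hS ha hc hac, zero_mul]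

lemma frobeniusForm_vecMulVec_self_ne_zero (h0 : ∀ a ∈ S, a ⬝ᵥ a ≠ 0)
    (h0' : ∀ b ∈ S', b ⬝ᵥ b ≠ 0) : ∀ X ∈ Set.image2 vecMulVec S S', frobeniusForm K X X ≠ 0 := by
  rintro _ ⟨a, ha, b, hb, rfl⟩
  rw [frobeniusForm_vecMulVec]
  exact mul_ne_zero (h0 a ha) (h0' b hb)

lemma pairwise_frobeniusForm_image2_vecMulVec (hS : S.Pairwise (· ⬝ᵥ · = 0))
    (hS' : S'.Pairwise (· ⬝ᵥ · = 0)) :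
    (Set.image2 vecMulVec S S').Pairwise (frobeniusForm K · · = 0) := by
  rintro _ ⟨a, ha, b, hb, rfl⟩ _ ⟨c, hc, d, hd, rfl⟩ hne
  exact frobeniusForm_vecMulVec_eq_zero hS hS' ha hc hb hd fun h => hne (by simp_all)

lemma ncard_image2_vecMulVec (hS : S.Pairwise (· ⬝ᵥ · = 0)) (hS' : S'.Pairwise (· ⬝ᵥ · = 0))
    (h0 : ∀ a ∈ S, a ⬝ᵥ a ≠ 0) (h0' : ∀ b ∈ S', b ⬝ᵥ b ≠ 0) :
    (Set.image2 vecMulVec S S').ncard = S.ncard * S'.ncard := by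
  rw [← Set.image_uncurry_prod, Set.InjOn.ncard_image, Set.ncard_prod]
  rintro ⟨a, b⟩ ⟨ha, hb⟩ ⟨c, d⟩ ⟨hc, hd⟩ h
  by_contra hne
  refine frobeniusForm_vecMulVec_self_ne_zero h0 h0' _ (Set.mem_image2_of_mem ha hb) ?_
  simp only [Function.uncurry_apply_pair] at h
  nth_rewrite 2 [h]
  exact frobeniusForm_vecMulVec_eq_zero hS hS' ha hc hb hd hne

end Frobenius

section ZeroLineSums

variable {m n : ℕ}

lemma vecMulVec_mem_V {a : Fin m → ℝ} {b : Fin n → ℝ} (ha : ∑ i, a i = 0) (hb : ∑ j, b j = 0) :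
    vecMulVec a b ∈ V m n :=
  ⟨fun i => by simp [vecMulVec_apply, ← mul_sum, hb],
    fun j => by simp [vecMulVec_apply, ← sum_mul, ha]⟩

lemma Fin.eq_zero_of_sum_eq_zero_of_castSucc {M : Type*} [AddCommMonoid M] {k : ℕ}
    {f : Fin (k + 1) → M} (hsum : ∑ i, f i = 0) (h : ∀ i : Fin k, f i.castSucc = 0)
    (i : Fin (k + 1)) : f i = 0 := by
  induction i using Fin.lastCases with
  | last => simpa [Fin.sum_univ_castSucc, h] using hsum
  | cast i => exact h i

lemma finrank_V_le : Module.finrank ℝ (V m n) ≤ (m - 1) * (n - 1) := by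
  obtain _ | m := m
  · exact (Submodule.finrank_le _).trans (by simp [Module.finrank_matrix])
  obtain _ | n := n
  · exact (Submodule.finrank_le _).trans (by simp [Module.finrank_matrix])
  let restrict : V (m + 1) (n + 1) →ₗ[ℝ] Matrix (Fin m) (Fin n) ℝ :=
    { toFun A := (A : Matrix (Fin (m + 1)) (Fin (n + 1)) ℝ).submatrix Fin.castSucc Fin.castSucc
      map_add' _ _ := rfl
      map_smul' _ _ := rfl }
  have hinj : Function.Injective restrict := by
    rw [← LinearMap.ker_eq_bot, Submodule.eq_bot_iff]
    rintro ⟨A, hrow, hcol⟩ hA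
    have hA' (i : Fin m) (j : Fin n) : A i.castSucc j.castSucc = 0 := congrFun (congrFun hA i) j
    have hrow' (i : Fin m) := Fin.eq_zero_of_sum_eq_zero_of_castSucc (hrow i.castSucc) (hA' i)
    ext i j
    exact Fin.eq_zero_of_sum_eq_zero_of_castSucc (hcol j) (fun i => hrow' i j) i
  simpa [Module.finrank_matrix] using LinearMap.finrank_le_finrank_of_injective hinj

lemma span_eq_V_of_linearIndependent {S : Set (Matrix (Fin m) (Fin n) ℝ)} (hSV : S ⊆ V m n)
    (hS : LinearIndependent ℝ (Subtype.val : S → Matrix (Fin m) (Fin n) ℝ))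
    (hcard : (m - 1) * (n - 1) ≤ S.ncard) : Submodule.span ℝ S = V m n := by
  have : Fintype S := @Fintype.ofFinite _ hS.finite
  refine Submodule.eq_of_le_of_finrank_le (Submodule.span_le.mpr hSV) ?_
  rw [finrank_span_set_eq_card hS, ← Set.ncard_eq_toFinset_card']
  exact finrank_V_le.trans hcard

end ZeroLineSums

/-- `B_{m,n}` is an orthogonal basis of `V_{m,n}` with exactly
`(m-1)(n-1)` distinct elements. -/
theorem stmt12 (m n : ℕ) (hm : 2 ≤ m) (hn : 2 ≤ n) :
    (B m n).ncard = (m - 1) * (n - 1) ∧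
    (∀ X ∈ B m n, X ∈ V m n) ∧
    (∀ X ∈ B m n, ∀ Y ∈ B m n, X ≠ Y →
      ∑ i : Fin m, ∑ j : Fin n, X i j * Y i j = 0) ∧
    LinearIndependent ℝ (Subtype.val : B m n → Matrix (Fin m) (Fin n) ℝ) ∧
    Submodule.span ℝ (B m n) = V m n := by
  have hcard : (B m n).ncard = (m - 1) * (n - 1) := by
    rw [B_eq_image2, ncard_image2_vecMulVec (pairwise_U hm) (pairwise_U hn)
      (fun _ => dotProduct_self_ne_zero_of_mem_U hm) (fun _ => dotProduct_self_ne_zero_of_mem_U hn),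
      ncard_U hm, ncard_U hn]
  have hV : B m n ⊆ V m n := by
    rw [B_eq_image2]
    rintro _ ⟨a, ha, b, hb, rfl⟩
    exact vecMulVec_mem_V (sum_eq_zero_of_mem_U hm ha) (sum_eq_zero_of_mem_U hn hb)
  have horth : (B m n).Pairwise (frobeniusForm ℝ · · = 0) := by
    rw [B_eq_image2]
    exact pairwise_frobeniusForm_image2_vecMulVec (pairwise_U hm) (pairwise_U hn)
  have hli : LinearIndependent ℝ (Subtype.val : B m n → Matrix (Fin m) (Fin n) ℝ) := by
    refine linearIndependent_of_pairwise_frobeniusForm horth ?_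
    rw [B_eq_image2]
    exact frobeniusForm_vecMulVec_self_ne_zero (fun _ => dotProduct_self_ne_zero_of_mem_U hm)
      (fun _ => dotProduct_self_ne_zero_of_mem_U hn)
  exact ⟨hcard, hV, fun X hX Y hY => horth hX hY, hli,
    span_eq_V_of_linearIndependent hV hli hcard.ge⟩
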